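/- arXiv:1602.01568 — 2 statements merged into one kernel-verified Lean document; each statement's English description precedes it below -/
import Mathlib

section
/- Let (X,σ) be a two-sided subshift over a finite alphabet that is proximal, has no isolated points, and admits a dense scrambled set S. Then (X,σ) is Li–Yorke sensitive: there exists ε > 0 such that every x ∈ X is a limit of points y with (x,y) proximal and limsup_{n→∞} d(σ^n(x), σ^n(y)) ≥ ε. -/
/-!
Take `ε = 1`. Given `x ∈ S` and a cylinder neighbourhood `U` of `x`, density of the scrambled
set together with perfectness of `S` yields two distinct points `z, w` of the scrambled set in
`U`. Since `limsup d(σⁿz, σⁿw) > 0`, the sequences `z` and `w` differ at infinitely many positive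
coordinates, so `x` differs from one of them, say `y`, at infinitely many positive coordinates.
Each such coordinate `n` gives `d(σⁿx, σⁿy) = 1`, and proximality gives `liminf = 0`.
-/

open Filter Topology Classical

/-- The shift map on two-sided sequences. -/
def shiftMap {A : Type*} (x : ℤ → A) : ℤ → A := fun n => x (n + 1)

/-- The standard metric on a two-sided shift space:
`d(x,y) = 2^{-min{|n| : x n ≠ y n}}`, and `0` if `x = y`. -/
noncomputable def subshiftDist {A : Type*} (x y : ℤ → A) : ℝ :=
  if x = y then 0
  else (2 : ℝ) ^ (-((sInf {k : ℕ | ∃ n : ℤ, n.natAbs = k ∧ x n ≠ y n} : ℕ) : ℤ))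

section Shift

variable {A : Type*}

lemma shiftMap_iterate_apply (x : ℤ → A) (n : ℕ) (m : ℤ) :
    (shiftMap^[n] x) m = x (m + n) := by
  induction n generalizing m with
  | zero => simp
  | succ k ih =>
    rw [Function.iterate_succ_apply', shiftMap, ih]
    push_cast
    ring_nf

lemma subshiftDist_nonneg (x y : ℤ → A) : 0 ≤ subshiftDist x y := by
  unfold subshiftDist
  split_ifs <;> positivity

lemma subshiftDist_le_one (x y : ℤ → A) : subshiftDist x y ≤ 1 := by
  unfold subshiftDist
  split_ifs
  · exact zero_le_one
  · exact zpow_le_one_of_nonpos₀ one_le_two (by simp)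

lemma subshiftDist_eq_one {x y : ℤ → A} (h : x 0 ≠ y 0) : subshiftDist x y = 1 := by
  have hxy : x ≠ y := fun he => h (congrFun he 0)
  have h0 : sInf {k : ℕ | ∃ n : ℤ, n.natAbs = k ∧ x n ≠ y n} = 0 :=
    Nat.sInf_eq_zero.2 (Or.inl ⟨0, rfl, h⟩)
  simp [subshiftDist, hxy, h0]

lemma subshiftDist_le_of_forall_natAbs_le {x y : ℤ → A} {N : ℕ}
    (h : ∀ n : ℤ, n.natAbs ≤ N → x n = y n) :
    subshiftDist x y ≤ (2 : ℝ) ^ (-((N : ℤ) + 1)) := by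
  unfold subshiftDist
  split_ifs with hxy
  · positivity
  · obtain ⟨n, hn⟩ : ∃ n, x n ≠ y n := not_forall.1 fun h' => hxy (funext h')
    obtain ⟨m, hm, hne⟩ := Nat.sInf_mem (s := {k : ℕ | ∃ n : ℤ, n.natAbs = k ∧ x n ≠ y n})
      ⟨n.natAbs, n, rfl, hn⟩
    have hlt : N < m.natAbs := lt_of_not_ge fun hle => hne (h m hle)
    exact zpow_le_zpow_right₀ one_le_two (by omega)

lemma exists_forall_subshiftDist_lt {δ : ℝ} (hδ : 0 < δ) :
    ∃ N : ℕ, ∀ x y : ℤ → A, (∀ n : ℤ, n.natAbs ≤ N → x n = y n) → subshiftDist x y < δ := by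
  obtain ⟨N, hN⟩ := exists_pow_lt_of_lt_one hδ (by norm_num : (1 / 2 : ℝ) < 1)
  refine ⟨N, fun x y h => ?_⟩
  calc subshiftDist x y ≤ (2 : ℝ) ^ (-((N : ℤ) + 1)) := subshiftDist_le_of_forall_natAbs_le h
    _ ≤ (2 : ℝ) ^ (-(N : ℤ)) := zpow_le_zpow_right₀ one_le_two (by omega)
    _ = (1 / 2 : ℝ) ^ N := by rw [one_div, inv_pow, ← zpow_natCast, ← zpow_neg]
    _ < δ := hN

lemma tendsto_subshiftDist_iterate_zero {x y : ℤ → A}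
    (h : ∀ᶠ n : ℕ in atTop, x n = y n) :
    Tendsto (fun n => subshiftDist (shiftMap^[n] x) (shiftMap^[n] y)) atTop (𝓝 0) := by
  obtain ⟨K, hK⟩ := eventually_atTop.1 h
  rw [Metric.tendsto_atTop]
  intro ε hε
  obtain ⟨N, hN⟩ := exists_forall_subshiftDist_lt (A := A) hε
  refine ⟨K + N, fun n hn => ?_⟩
  rw [Real.dist_eq, sub_zero, abs_of_nonneg (subshiftDist_nonneg _ _)]
  refine hN _ _ fun m hm => ?_
  have hmn : 0 ≤ m + n := by omega
  rw [shiftMap_iterate_apply, shiftMap_iterate_apply, ← Int.toNat_of_nonneg hmn]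
  exact hK _ (by omega)

lemma frequently_ne_of_limsup_subshiftDist_iterate_pos {x y : ℤ → A}
    (h : 0 < limsup (fun n => subshiftDist (shiftMap^[n] x) (shiftMap^[n] y)) atTop) :
    ∃ᶠ n : ℕ in atTop, x n ≠ y n := by
  by_contra hfreq
  rw [not_frequently] at hfreq
  rw [(tendsto_subshiftDist_iterate_zero (hfreq.mono fun _ => not_not.1)).limsup_eq] at h
  exact h.false

lemma one_le_limsup_subshiftDist_iterate {x y : ℤ → A} (h : ∃ᶠ n : ℕ in atTop, x n ≠ y n) :
    1 ≤ limsup (fun n => subshiftDist (shiftMap^[n] x) (shiftMap^[n] y)) atTop := by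
  refine le_limsup_of_frequently_le (h.mono fun n hn => ?_)
    (isBoundedUnder_of ⟨1, fun n => subshiftDist_le_one _ _⟩)
  rw [subshiftDist_eq_one (by simpa [shiftMap_iterate_apply] using hn)]

lemma isOpen_cylinder [TopologicalSpace A] [DiscreteTopology A] (x : ℤ → A) (N : ℕ) :
    IsOpen ({n : ℤ | n.natAbs ≤ N}.pi fun n => {x n}) := by
  refine isOpen_set_pi ((Set.finite_Icc (-(N : ℤ)) N).subset fun n hn => ?_)
    fun _ _ => isOpen_discrete _
  simp only [Set.mem_ofPred_eq, Set.mem_Icc] at hn ⊢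
  omega

end Shift

lemma Filter.Frequently.ne_left_or_ne_right {α β : Type*} {l : Filter α} {z w : α → β}
    (h : ∃ᶠ n in l, z n ≠ w n) (x : α → β) :
    (∃ᶠ n in l, x n ≠ z n) ∨ ∃ᶠ n in l, x n ≠ w n := by
  by_contra! hxzw
  exact h (hxzw.1.and hxzw.2 |>.mono fun _ hn => not_not.2 (hn.1.symm.trans hn.2))

lemma exists_ne_mem_of_perfect_of_subset_closure {X : Type*} [TopologicalSpace X] [T1Space X]
    {S D U : Set X} (hS : Perfect S) (hD : S ⊆ closure D) (hU : IsOpen U) {x : X} (hxS : x ∈ S)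
    (hxU : x ∈ U) : ∃ z ∈ D, z ∈ U ∧ ∃ w ∈ D, w ∈ U ∧ z ≠ w := by
  obtain ⟨z, hzU, hzD⟩ := mem_closure_iff.1 (hD hxS) U hU hxU
  obtain ⟨s, hsU, hsS, hsz⟩ : ∃ s ∈ U, s ∈ S ∧ s ≠ z := by
    by_cases hzx : z = x
    · obtain ⟨s, ⟨hsU, hsS⟩, hsx⟩ := accPt_iff_nhds.1 (hS.acc x hxS) U (hU.mem_nhds hxU)
      exact ⟨s, hsU, hsS, hzx ▸ hsx⟩
    · exact ⟨x, hxU, hxS, Ne.symm hzx⟩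
  obtain ⟨w, ⟨hwU, hwz⟩, hwD⟩ :=
    mem_closure_iff.1 (hD hsS) _ (hU.inter isOpen_compl_singleton) ⟨hsU, hsz⟩
  exact ⟨z, hzD, hzU, w, hwD, hwU, Ne.symm hwz⟩

theorem stmt6_general {A : Type*} [TopologicalSpace A] [DiscreteTopology A]
    (S : Set (ℤ → A))
    -- the system is proximal
    (hprox : ∀ x ∈ S, ∀ y ∈ S, Filter.liminf
      (fun n => subshiftDist (shiftMap^[n] x) (shiftMap^[n] y)) Filter.atTop = 0)
    -- no isolated points
    (hperf : Perfect S)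
    -- a dense scrambled subset
    (Sc : Set (ℤ → A)) (hSc : Sc ⊆ S) (hdense : S ⊆ closure Sc)
    (hscr : ∀ x ∈ Sc, ∀ y ∈ Sc, x ≠ y →
      Filter.liminf
        (fun n => subshiftDist (shiftMap^[n] x) (shiftMap^[n] y)) Filter.atTop = 0 ∧
      0 < Filter.limsup
        (fun n => subshiftDist (shiftMap^[n] x) (shiftMap^[n] y)) Filter.atTop) :
    -- Li–Yorke sensitivity
    ∃ ε > (0 : ℝ), ∀ x ∈ S, ∀ δ > (0 : ℝ), ∃ y ∈ S, y ≠ x ∧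
      subshiftDist x y < δ ∧
      Filter.liminf
        (fun n => subshiftDist (shiftMap^[n] x) (shiftMap^[n] y)) Filter.atTop = 0 ∧
      ε ≤ Filter.limsup
        (fun n => subshiftDist (shiftMap^[n] x) (shiftMap^[n] y)) Filter.atTop := by
  refine ⟨1, one_pos, fun x hx δ hδ => ?_⟩
  obtain ⟨N, hN⟩ := exists_forall_subshiftDist_lt (A := A) hδ
  obtain ⟨z, hzSc, hzU, w, hwSc, hwU, hzw⟩ :=
    exists_ne_mem_of_perfect_of_subset_closure hperf hdense (isOpen_cylinder x N) hx
      (fun n _ => rfl)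
  obtain ⟨y, hySc, hyU, hxy⟩ : ∃ y ∈ Sc, y ∈ {n : ℤ | n.natAbs ≤ N}.pi (fun n => {x n}) ∧
      ∃ᶠ n : ℕ in atTop, x n ≠ y n := by
    have hfreq := frequently_ne_of_limsup_subshiftDist_iterate_pos (hscr z hzSc w hwSc hzw).2
    rcases hfreq.ne_left_or_ne_right fun n : ℕ => x n with h | h
    exacts [⟨z, hzSc, hzU, h⟩, ⟨w, hwSc, hwU, h⟩]
  obtain ⟨n, hn⟩ := hxy.exists
  refine ⟨y, hSc hySc, fun hyx => hn (by rw [hyx]), hN x y fun m hm => (hyU m hm).symm,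
    hprox x hx y (hSc hySc), one_le_limsup_subshiftDist_iterate hxy⟩

theorem stmt6 {A : Type*} [Fintype A] [TopologicalSpace A] [DiscreteTopology A]
    (S : Set (ℤ → A)) (hcl : IsClosed S) (hinv : shiftMap '' S = S)
    -- the system is proximal
    (hprox : ∀ x ∈ S, ∀ y ∈ S, Filter.liminf
      (fun n => subshiftDist (shiftMap^[n] x) (shiftMap^[n] y)) Filter.atTop = 0)
    -- no isolated points
    (hperf : Perfect S)
    -- a dense scrambled subset
    (Sc : Set (ℤ → A)) (hSc : Sc ⊆ S) (hdense : S ⊆ closure Sc)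
    (hscr : ∀ x ∈ Sc, ∀ y ∈ Sc, x ≠ y →
      Filter.liminf
        (fun n => subshiftDist (shiftMap^[n] x) (shiftMap^[n] y)) Filter.atTop = 0 ∧
      0 < Filter.limsup
        (fun n => subshiftDist (shiftMap^[n] x) (shiftMap^[n] y)) Filter.atTop) :
    -- Li–Yorke sensitivity
    ∃ ε > (0 : ℝ), ∀ x ∈ S, ∀ δ > (0 : ℝ), ∃ y ∈ S, y ≠ x ∧
      subshiftDist x y < δ ∧
      Filter.liminf
        (fun n => subshiftDist (shiftMap^[n] x) (shiftMap^[n] y)) Filter.atTop = 0 ∧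
      ε ≤ Filter.limsup
        (fun n => subshiftDist (shiftMap^[n] x) (shiftMap^[n] y)) Filter.atTop :=
  stmt6_general S hprox hperf Sc hSc hdense hscr
end

section
/- With α, β as defined (α(1)=1, α(0)=0010011, β(1)=1, β(0)=1001001), for all integers l > k ≥ 1 it holds that α^k(1^l 0) = β^k(1^{l−k} 0 1^k), where 1^m denotes the word consisting of m copies of the symbol 1. -/
/-- The substitution α: α(1) = 1, α(0) = 0010011 (with `true` playing the role
of the symbol 1 and `false` the role of 0). -/
def alSub : Bool → List Bool
  | true => [true]
  | false => [false, false, true, false, false, true, true]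

/-- The substitution β: β(1) = 1, β(0) = 1001001. -/
def beSub : Bool → List Bool
  | true => [true]
  | false => [true, false, false, true, false, false, true]

/-- Extension of α to words by concatenation. -/
def alW (w : List Bool) : List Bool := w.flatMap alSub

/-- Extension of β to words by concatenation. -/
def beW (w : List Bool) : List Bool := w.flatMap beSub

lemma alW_append (x y : List Bool) : alW (x ++ y) = alW x ++ alW y := by
  simp [alW]

lemma beW_append (x y : List Bool) : beW (x ++ y) = beW x ++ beW y := by
  simp [beW]

lemma alW_one : alW [true] = [true] := rfl
lemma beW_one : beW [true] = [true] := rfl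

lemma alW_rep (m : ℕ) : alW (List.replicate m true) = List.replicate m true := by
  induction m with
  | zero => rfl
  | succ n ih =>
    rw [List.replicate_succ]
    show alW ([true] ++ List.replicate n true) = _
    rw [alW_append, alW_one, ih]; rfl

lemma beW_rep (m : ℕ) : beW (List.replicate m true) = List.replicate m true := by
  induction m with
  | zero => rfl
  | succ n ih =>
    rw [List.replicate_succ]
    show beW ([true] ++ List.replicate n true) = _
    rw [beW_append, beW_one, ih]; rfl

lemma alW_iter_rep (k m : ℕ) (x : List Bool) :
    alW^[k] (List.replicate m true ++ x) = List.replicate m true ++ alW^[k] x := by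
  induction k generalizing x with
  | zero => rfl
  | succ n ih =>
    rw [Function.iterate_succ_apply, alW_append, alW_rep, Function.iterate_succ_apply, ih]

lemma beW_iter_rep (k m : ℕ) (x : List Bool) :
    beW^[k] (List.replicate m true ++ x) = List.replicate m true ++ beW^[k] x := by
  induction k generalizing x with
  | zero => rfl
  | succ n ih =>
    rw [Function.iterate_succ_apply, beW_append, beW_rep, Function.iterate_succ_apply, ih]

lemma alW_iter_rep_right (k m : ℕ) (x : List Bool) :
    alW^[k] (x ++ List.replicate m true) = alW^[k] x ++ List.replicate m true := by
  induction k generalizing x with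
  | zero => rfl
  | succ n ih =>
    rw [Function.iterate_succ_apply, alW_append, alW_rep, Function.iterate_succ_apply, ih]

lemma beW_iter_rep_right (k m : ℕ) (x : List Bool) :
    beW^[k] (x ++ List.replicate m true) = beW^[k] x ++ List.replicate m true := by
  induction k generalizing x with
  | zero => rfl
  | succ n ih =>
    rw [Function.iterate_succ_apply, beW_append, beW_rep, Function.iterate_succ_apply, ih]

/-- Key conjugacy: β(w)·1 = 1·α(w). -/
lemma key (w : List Bool) : beW w ++ [true] = true :: alW w := by
  induction w with
  | nil => rfl
  | cons a t ih =>
    have h1 : beW (a :: t) = beSub a ++ beW t := rfl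
    have h2 : alW (a :: t) = alSub a ++ alW t := rfl
    rw [h1, h2, List.append_assoc, ih]
    cases a <;> rfl

lemma keyIter (k : ℕ) (w : List Bool) :
    beW^[k] w ++ List.replicate k true = List.replicate k true ++ alW^[k] w := by
  induction k generalizing w with
  | zero => simp
  | succ n ih =>
    rw [Function.iterate_succ_apply, List.replicate_succ']
    rw [← List.append_assoc, ih (beW w), List.append_assoc]
    have : alW^[n] (beW w) ++ [true] = alW^[n] (beW w ++ [true]) := by
      simpa using (alW_iter_rep_right n 1 (beW w)).symm
    rw [this, key]
    have h3 : alW^[n] (true :: alW w) = true :: alW^[n] (alW w) := by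
      simpa using alW_iter_rep n 1 (alW w)
    rw [h3, Function.iterate_succ_apply]
    simp [List.replicate_succ']

/-- For all `l > k ≥ 1`, `α^k(1^l 0) = β^k(1^{l−k} 0 1^k)`. -/
theorem stmt9 :
    ∀ k l : ℕ, 1 ≤ k → k < l →
      alW^[k] (List.replicate l true ++ [false]) =
      beW^[k] (List.replicate (l - k) true ++ [false] ++ List.replicate k true) := by
  intro k l _ hkl
  rw [alW_iter_rep, List.append_assoc, beW_iter_rep, beW_iter_rep_right, keyIter]
  have : l = (l - k) + k := (Nat.sub_add_cancel hkl.le).symm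
  conv_lhs => rw [this, List.replicate_add]
  rw [List.append_assoc]
end
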